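/- Let p ∈ (0,1), q ∈ [0,1], and π̄ ∈ [0,1]. Then π̄·(q/p) + (1-π̄)·((1-q)/(1-p)) > 1 if and only if (π̄ - p) and (q - p) are both strictly positive or both strictly negative. -/
import Mathlib


/-- The conditional expectation of the e-variable `E_q` under an alternative with
conditional event probability `π̄` exceeds one iff `π̄` and `q` are on the same side of `p`. -/
theorem evalue_growth_iff_same_side (p q π : ℝ) (hp : p ∈ Set.Ioo (0 : ℝ) 1)
    (hq : q ∈ Set.Icc (0 : ℝ) 1) (hπ : π ∈ Set.Icc (0 : ℝ) 1) :
    1 < π * (q / p) + (1 - π) * ((1 - q) / (1 - p)) ↔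
      (0 < π - p ∧ 0 < q - p) ∨ (π - p < 0 ∧ q - p < 0) := by
  obtain ⟨hp0, hp1⟩ := hp
  have h1p : 0 < 1 - p := by linarith
  have key : π * (q / p) + (1 - π) * ((1 - q) / (1 - p)) - 1
      = (π - p) * (q - p) / (p * (1 - p)) := by
    field_simp
    ring
  have hden : 0 < p * (1 - p) := mul_pos hp0 h1p
  constructor
  · intro h
    have : 0 < (π - p) * (q - p) / (p * (1 - p)) := by linarith [key]
    have := (div_pos_iff.mp this).resolve_right (fun ⟨_, h2⟩ => absurd hden (not_lt.mpr h2.le))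
    exact mul_pos_iff.mp this.1
  · intro h
    have hpos : 0 < (π - p) * (q - p) := mul_pos_iff.mpr h
    have := div_pos hpos hden
    linarith [key]
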